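/- Let ψ : ℝ → ℝ₊ and ψ₀ : ℝⁿ → ℝ₊ be continuous, positive-definite, symmetric, and satisfy generalized homogeneity. Let G_t(θ) = α_ψ Σ_{k=1}^{t} λ^{t−k} ψ(x_kᵀθ) + α_{ψ₀} λ^t ψ₀(θ) with α_ψ, α_{ψ₀} > 0 and λ ∈ (0,1). If {x_t} is persistently exciting with respect to ψ (with horizon T and K∞ bounds α, β), then there exist time-invariant class-K∞ functions g₁, g₂ such that g₁(‖θ‖) ≤ G_t(θ) ≤ g₂(‖θ‖) for all t ∈ ℕ and θ ∈ ℝⁿ. -/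

import Mathlib

open Finset Filter

/-- A class-K∞ function: continuous on [0,∞), zero at zero, strictly increasing
on [0,∞), and tending to ∞ at ∞. -/
def ClassKInf (f : ℝ → ℝ) : Prop :=
  ContinuousOn f (Set.Ici 0) ∧ f 0 = 0 ∧ StrictMonoOn f (Set.Ici 0) ∧
    Tendsto f atTop atTop

/-- Dot product on ℝⁿ. -/
def dot {n : ℕ} (x θ : Fin n → ℝ) : ℝ := ∑ i, x i * θ i

/-- `N` is a norm on ℝⁿ. -/
def IsNorm {n : ℕ} (N : (Fin n → ℝ) → ℝ) : Prop :=
  (∀ x, 0 ≤ N x) ∧ (∀ x, N x = 0 ↔ x = 0) ∧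
    (∀ (a : ℝ) (x), N (a • x) = |a| * N x) ∧ (∀ x y, N (x + y) ≤ N x + N y)

/-!
Generalized homogeneity lets one rescale `θ` to the unit sphere, where the continuous
positive-definite `ψ₀` (and the norm `N` itself) is bounded above and below by positive
constants; this yields class-K∞ bounds `h₁ (N θ) ≤ ψ₀ θ ≤ h₂ (N θ)`. For the data term,
grouping the discounted sum into windows of length `T` gives at most the geometric series
`β (N θ) (1 + λ^T + λ^(2T) + ⋯)`, and, once `t ≥ T`, at least `λ^T α (N θ)` from the last
window. For `t < T` the lower bound is carried by the prior term `λ^t ψ₀ θ ≥ λ^T h₁ (N θ)`.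
-/

open Topology

namespace ClassKInf

variable {f g : ℝ → ℝ}

theorem map_zero (hf : ClassKInf f) : f 0 = 0 := hf.2.1

theorem continuousOn (hf : ClassKInf f) : ContinuousOn f (Set.Ici 0) := hf.1

theorem strictMonoOn (hf : ClassKInf f) : StrictMonoOn f (Set.Ici 0) := hf.2.2.1

theorem tendsto_atTop (hf : ClassKInf f) : Tendsto f atTop atTop := hf.2.2.2

theorem pos (hf : ClassKInf f) {s : ℝ} (hs : 0 < s) : 0 < f s := by
  simpa [hf.map_zero] using hf.strictMonoOn Set.self_mem_Ici hs.le hs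

theorem nonneg (hf : ClassKInf f) {s : ℝ} (hs : 0 ≤ s) : 0 ≤ f s := by
  rcases hs.eq_or_lt with rfl | hs
  · exact hf.map_zero.ge
  · exact (hf.pos hs).le

theorem mono (hf : ClassKInf f) {a b : ℝ} (ha : 0 ≤ a) (hab : a ≤ b) : f a ≤ f b :=
  hf.strictMonoOn.monotoneOn ha (ha.trans hab) hab

protected theorem id : ClassKInf id :=
  ⟨continuousOn_id, rfl, strictMono_id.strictMonoOn _, tendsto_id⟩

theorem const_mul (hf : ClassKInf f) {c : ℝ} (hc : 0 < c) : ClassKInf (fun s => c * f s) :=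
  ⟨continuousOn_const.mul hf.continuousOn, by simp [hf.map_zero],
    fun _ ha _ hb hab => mul_lt_mul_of_pos_left (hf.strictMonoOn ha hb hab) hc,
    hf.tendsto_atTop.const_mul_atTop hc⟩

theorem comp (hf : ClassKInf f) (hg : ClassKInf g) : ClassKInf (fun s => f (g s)) := by
  have hmaps : Set.MapsTo g (Set.Ici 0) (Set.Ici 0) := fun _ hs => hg.nonneg hs
  exact ⟨hf.continuousOn.comp hg.continuousOn hmaps, by simp [hf.map_zero, hg.map_zero],
    hf.strictMonoOn.comp hg.strictMonoOn hmaps, hf.tendsto_atTop.comp hg.tendsto_atTop⟩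

theorem min (hf : ClassKInf f) (hg : ClassKInf g) : ClassKInf (fun s => min (f s) (g s)) :=
  ⟨hf.continuousOn.inf hg.continuousOn, by simp [hf.map_zero, hg.map_zero],
    fun _ ha _ hb hab => min_lt_min (hf.strictMonoOn ha hb hab) (hg.strictMonoOn ha hb hab),
    tendsto_inf_atTop atTop hf.tendsto_atTop hg.tendsto_atTop⟩

theorem add (hf : ClassKInf f) (hg : ClassKInf g) : ClassKInf (fun s => f s + g s) :=
  ⟨hf.continuousOn.add hg.continuousOn, by simp [hf.map_zero, hg.map_zero],
    fun _ ha _ hb hab => add_lt_add (hf.strictMonoOn ha hb hab) (hg.strictMonoOn ha hb hab),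
    hf.tendsto_atTop.atTop_add_atTop hg.tendsto_atTop⟩

/-- At `s = 0` the value is `M / f 0 = M / 0 = 0`, which is the correct limit. -/
theorem const_div_comp_inv (hf : ClassKInf f) {M : ℝ} (hM : 0 < M) :
    ClassKInf (fun s => M / f s⁻¹) := by
  have hf0 : Tendsto f (𝓝[>] 0) (𝓝[>] 0) :=
    tendsto_nhdsWithin_iff.2 ⟨by simpa [hf.map_zero] using
      (hf.continuousOn 0 Set.self_mem_Ici).mono_left (nhdsWithin_mono _ Set.Ioi_subset_Ici_self),
      eventually_nhdsWithin_of_forall fun _ hs => hf.pos hs⟩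
  refine ⟨fun s hs => ?_, by simp [hf.map_zero], fun a ha b hb hab => ?_, ?_⟩
  · rcases (Set.mem_Ici.1 hs).eq_or_lt with rfl | hs
    · refine continuousWithinAt_Ioi_iff_Ici.1 ?_
      simpa [ContinuousWithinAt, hf.map_zero] using
        tendsto_const_nhds.div_atTop (hf.tendsto_atTop.comp tendsto_inv_nhdsGT_zero)
    · have hfs : ContinuousAt f s⁻¹ :=
        hf.continuousOn.continuousAt (Ici_mem_nhds (inv_pos.2 hs))
      exact (continuousAt_const.div (hfs.comp (continuousAt_inv₀ hs.ne'))
        (hf.pos (inv_pos.2 hs)).ne').continuousWithinAt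
  · have hb : 0 < b := lt_of_le_of_lt ha hab
    rcases (Set.mem_Ici.1 ha).eq_or_lt with rfl | ha
    · simpa [hf.map_zero] using div_pos hM (hf.pos (inv_pos.2 hb))
    · exact div_lt_div_of_pos_left hM (hf.pos (inv_pos.2 hb))
        (hf.strictMonoOn (inv_pos.2 hb).le (inv_pos.2 ha).le (inv_strictAnti₀ ha hab))
  · simpa [div_eq_mul_inv] using
      (tendsto_inv_nhdsGT_zero.comp (hf0.comp tendsto_inv_atTop_nhdsGT_zero)).const_mul_atTop hM

end ClassKInf

section DiscountedSum

/-- The data term of `G_t`, with `p k = ψ (x_kᵀ θ)`. -/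
def discountedSum (l : ℝ) (p : ℕ → ℝ) (t : ℕ) : ℝ := ∑ k ∈ Icc 1 t, l ^ (t - k) * p k

variable {l : ℝ} {p : ℕ → ℝ}

theorem discountedSum_nonneg (hl : 0 ≤ l) (hp : ∀ k, 0 ≤ p k) (t : ℕ) :
    0 ≤ discountedSum l p t :=
  sum_nonneg fun k _ => mul_nonneg (pow_nonneg hl _) (hp k)

theorem discountedSum_add (l : ℝ) (p : ℕ → ℝ) (s T : ℕ) :
    discountedSum l p (s + T) =
      l ^ T * discountedSum l p s + ∑ k ∈ Icc (s + 1) (s + T), l ^ (s + T - k) * p k := by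
  have hpow : ∀ k ∈ Ioc 0 s, l ^ (s + T - k) * p k = l ^ T * (l ^ (s - k) * p k) := by
    intro k hk
    rw [show s + T - k = T + (s - k) by have := (mem_Ioc.1 hk).2; omega, pow_add, mul_assoc]
  have hIcc : ∀ t, Icc 1 t = Ioc 0 t := Icc_add_one_left_eq_Ioc 0
  rw [discountedSum, discountedSum, hIcc, hIcc, Icc_add_one_left_eq_Ioc,
    ← sum_Ioc_consecutive _ (Nat.zero_le s) (Nat.le_add_right s T), sum_congr rfl hpow, mul_sum]

theorem sum_mul_pow_le_sum (hl₀ : 0 ≤ l) (hl₁ : l ≤ 1) (hp : ∀ k, 0 ≤ p k) (s : Finset ℕ)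
    (e : ℕ → ℕ) : ∑ k ∈ s, l ^ e k * p k ≤ ∑ k ∈ s, p k :=
  sum_le_sum fun k _ => mul_le_of_le_one_left (hp k) (pow_le_one₀ hl₀ hl₁)

theorem discountedSum_le_of_window_le (hl₀ : 0 ≤ l) (hl₁ : l < 1) (hp : ∀ k, 0 ≤ p k)
    {T : ℕ} (hT : 0 < T) {b : ℝ} (hwin : ∀ s, ∑ k ∈ Icc (s + 1) (s + T), p k ≤ b) (t : ℕ) :
    discountedSum l p t ≤ b / (1 - l ^ T) := by
  have hlT : 0 < 1 - l ^ T := sub_pos.2 (pow_lt_one₀ hl₀ hl₁ hT.ne')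
  have hb : b ≤ b / (1 - l ^ T) := by
    have := (sum_nonneg fun k _ => hp k).trans (hwin 0)
    rw [le_div_iff₀ hlT]; nlinarith [pow_nonneg hl₀ T]
  induction t using Nat.strong_induction_on with
  | _ t ih =>
    rcases lt_or_ge t T with htT | hTt
    · calc discountedSum l p t ≤ ∑ k ∈ Icc 1 t, p k := sum_mul_pow_le_sum hl₀ hl₁.le hp _ _
        _ ≤ ∑ k ∈ Icc (0 + 1) (0 + T), p k := by
          simpa using sum_le_sum_of_subset_of_nonneg (Icc_subset_Icc_right htT.le)
            fun k _ _ => hp k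
        _ ≤ b / (1 - l ^ T) := (hwin 0).trans hb
    · obtain ⟨s, rfl⟩ := Nat.exists_eq_add_of_le' hTt
      have ih := ih s (by omega)
      calc discountedSum l p (s + T)
          ≤ l ^ T * (b / (1 - l ^ T)) + b := by
            rw [discountedSum_add]
            gcongr
            exact (sum_mul_pow_le_sum hl₀ hl₁.le hp _ _).trans (hwin s)
        _ = b / (1 - l ^ T) := by field_simp; ring

theorem le_discountedSum_of_le_window (hl₀ : 0 ≤ l) (hl₁ : l ≤ 1) (hp : ∀ k, 0 ≤ p k)
    {T : ℕ} {a : ℝ} (hwin : ∀ s, a ≤ ∑ k ∈ Icc (s + 1) (s + T), p k) {t : ℕ} (hTt : T ≤ t) :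
    l ^ T * a ≤ discountedSum l p t := by
  obtain ⟨s, rfl⟩ := Nat.exists_eq_add_of_le' hTt
  calc l ^ T * a ≤ ∑ k ∈ Icc (s + 1) (s + T), l ^ T * p k := by
        rw [← mul_sum]; exact mul_le_mul_of_nonneg_left (hwin s) (pow_nonneg hl₀ T)
    _ ≤ ∑ k ∈ Icc (s + 1) (s + T), l ^ (s + T - k) * p k := by
        refine sum_le_sum fun k hk => mul_le_mul_of_nonneg_right
          (pow_le_pow_of_le_one hl₀ hl₁ ?_) (hp k)
        have := (mem_Icc.1 hk).1
        omega
    _ ≤ discountedSum l p (s + T) := by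
        rw [discountedSum_add]
        exact le_add_of_nonneg_left (mul_nonneg (pow_nonneg hl₀ T) (discountedSum_nonneg hl₀ hp s))

theorem min_le_discountedSum_add (hl₀ : 0 ≤ l) (hl₁ : l ≤ 1) (hp : ∀ k, 0 ≤ p k) {T : ℕ}
    {a : ℝ} (hwin : ∀ s, a ≤ ∑ k ∈ Icc (s + 1) (s + T), p k) {A B c₀ c : ℝ} (hA : 0 ≤ A)
    (hB : 0 ≤ B) (hc₀ : 0 ≤ c₀) (hc : c₀ ≤ c) (t : ℕ) :
    min (A * l ^ T * a) (B * l ^ T * c₀) ≤ A * discountedSum l p t + B * l ^ t * c := by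
  have hD := discountedSum_nonneg hl₀ hp t
  rcases le_or_gt T t with hTt | htT
  · calc min (A * l ^ T * a) (B * l ^ T * c₀) ≤ A * (l ^ T * a) :=
          (min_le_left _ _).trans_eq (mul_assoc _ _ _)
      _ ≤ A * discountedSum l p t :=
          mul_le_mul_of_nonneg_left (le_discountedSum_of_le_window hl₀ hl₁ hp hwin hTt) hA
      _ ≤ _ := le_add_of_nonneg_right (mul_nonneg (by positivity) (hc₀.trans hc))
  · calc min (A * l ^ T * a) (B * l ^ T * c₀) ≤ B * l ^ t * c := by
          refine (min_le_right _ _).trans (mul_le_mul ?_ hc hc₀ (by positivity))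
          exact mul_le_mul_of_nonneg_left (pow_le_pow_of_le_one hl₀ hl₁ htT.le) hB
      _ ≤ _ := le_add_of_nonneg_left (by positivity)

theorem discountedSum_add_le (hl₀ : 0 ≤ l) (hl₁ : l < 1) (hp : ∀ k, 0 ≤ p k) {T : ℕ}
    (hT : 0 < T) {b : ℝ} (hwin : ∀ s, ∑ k ∈ Icc (s + 1) (s + T), p k ≤ b) {A B c c₁ : ℝ}
    (hA : 0 ≤ A) (hB : 0 ≤ B) (hc : 0 ≤ c) (hc₁ : c ≤ c₁) (t : ℕ) :
    A * discountedSum l p t + B * l ^ t * c ≤ A / (1 - l ^ T) * b + B * c₁ := by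
  have hlT : 0 < 1 - l ^ T := sub_pos.2 (pow_lt_one₀ hl₀ hl₁ hT.ne')
  calc A * discountedSum l p t + B * l ^ t * c ≤ A * (b / (1 - l ^ T)) + B * 1 * c₁ := by
        gcongr
        exacts [discountedSum_le_of_window_le hl₀ hl₁ hp hT hwin t, pow_le_one₀ hl₀ hl₁.le]
    _ = A / (1 - l ^ T) * b + B * c₁ := by ring

end DiscountedSum

section Homogeneous

variable {E : Type*} [NormedAddCommGroup E] [NormedSpace ℝ E] [FiniteDimensional ℝ E]
  {φ : E → ℝ}

theorem exists_bounds_on_unit_sphere (hφc : Continuous φ) (hφnn : ∀ u, 0 ≤ φ u)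
    (hφpd : ∀ u, φ u = 0 ↔ u = 0) :
    ∃ m M : ℝ, 0 < m ∧ 0 < M ∧ ∀ u : E, ‖u‖ = 1 → m ≤ φ u ∧ φ u ≤ M := by
  have hpos : ∀ u : E, ‖u‖ = 1 → 0 < φ u := fun u hu =>
    (hφnn u).lt_of_ne' fun h => by simp [(hφpd u).1 h] at hu
  have hS := isCompact_sphere (0 : E) 1
  rcases (Metric.sphere (0 : E) 1).eq_empty_or_nonempty with hempty | hne
  · exact ⟨1, 1, one_pos, one_pos, fun u hu => absurd (hempty ▸ mem_sphere_zero_iff_norm.2 hu)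
      (Set.notMem_empty u)⟩
  obtain ⟨u₀, hu₀, hmin⟩ := hS.exists_isMinOn hne hφc.continuousOn
  obtain ⟨u₁, hu₁, hmax⟩ := hS.exists_isMaxOn hne hφc.continuousOn
  rw [mem_sphere_zero_iff_norm] at hu₀ hu₁
  exact ⟨φ u₀, φ u₁, hpos u₀ hu₀, hpos u₁ hu₁, fun u hu =>
    ⟨hmin (mem_sphere_zero_iff_norm.2 hu), hmax (mem_sphere_zero_iff_norm.2 hu)⟩⟩

theorem exists_bounds_of_homogeneous {f : ℝ → ℝ} (hf : ClassKInf f) (hφc : Continuous φ)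
    (hφnn : ∀ θ, 0 ≤ φ θ) (hφpd : ∀ θ, φ θ = 0 ↔ θ = 0)
    (hφGH : ∀ (θ : E) (r : ℝ), r ≠ 0 → f (1 / |r|) * φ (r • θ) ≤ φ θ) :
    ∃ m M : ℝ, 0 < m ∧ 0 < M ∧ ∀ θ : E, m * f ‖θ‖ ≤ φ θ ∧ φ θ ≤ M / f ‖θ‖⁻¹ := by
  obtain ⟨m, M, hm, hM, hS⟩ := exists_bounds_on_unit_sphere hφc hφnn hφpd
  refine ⟨m, M, hm, hM, fun θ => ?_⟩
  rcases eq_or_ne θ 0 with rfl | hθ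
  · simp [(hφpd 0).2 rfl, hf.map_zero]
  have hθpos : 0 < ‖θ‖ := norm_pos_iff.2 hθ
  have hu := hS (‖θ‖⁻¹ • θ) (norm_smul_inv_norm (𝕜 := ℝ) hθ)
  have hlow := hφGH θ ‖θ‖⁻¹ (inv_ne_zero hθpos.ne')
  have hup := hφGH (‖θ‖⁻¹ • θ) ‖θ‖ hθpos.ne'
  rw [abs_inv, abs_norm, one_div, inv_inv] at hlow
  rw [abs_norm, smul_inv_smul₀ hθpos.ne', one_div] at hup
  constructor
  · calc m * f ‖θ‖ ≤ f ‖θ‖ * φ (‖θ‖⁻¹ • θ) := by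
          rw [mul_comm]; exact mul_le_mul_of_nonneg_left hu.1 (hf.nonneg hθpos.le)
      _ ≤ φ θ := hlow
  · rw [le_div_iff₀ (hf.pos (inv_pos.2 hθpos)), mul_comm]
    exact hup.trans hu.2

end Homogeneous

section IsNorm

variable {n : ℕ} {N : (Fin n → ℝ) → ℝ}

theorem IsNorm.convexOn (hN : IsNorm N) : ConvexOn ℝ Set.univ N := by
  refine ⟨convex_univ, fun x _ y _ a b ha hb _ => ?_⟩
  calc N (a • x + b • y) ≤ N (a • x) + N (b • y) := hN.2.2.2 _ _
    _ = a • N x + b • N y := by rw [hN.2.2.1, hN.2.2.1, abs_of_nonneg ha, abs_of_nonneg hb]; rfl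

theorem IsNorm.continuous (hN : IsNorm N) : Continuous N :=
  hN.convexOn.locallyLipschitz.continuous

theorem IsNorm.exists_equiv_norm (hN : IsNorm N) :
    ∃ c C : ℝ, 0 < c ∧ 0 < C ∧ ∀ θ, c * ‖θ‖ ≤ N θ ∧ N θ ≤ C * ‖θ‖ := by
  obtain ⟨c, C, hc, hC, hcC⟩ := exists_bounds_of_homogeneous ClassKInf.id hN.continuous hN.1
    hN.2.1 fun θ r hr => by
      rw [hN.2.2.1, id, ← mul_assoc, one_div_mul_cancel (abs_ne_zero.2 hr), one_mul]
  exact ⟨c, C, hc, hC, fun θ => by simpa [div_inv_eq_mul] using hcC θ⟩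

theorem IsNorm.exists_classKInf_bounds_of_homogeneous (hN : IsNorm N) {φ : (Fin n → ℝ) → ℝ}
    {f : ℝ → ℝ} (hφc : Continuous φ) (hφnn : ∀ θ, 0 ≤ φ θ) (hφpd : ∀ θ, φ θ = 0 ↔ θ = 0)
    (hf : ClassKInf f) (hφGH : ∀ θ (r : ℝ), r ≠ 0 → f (1 / |r|) * φ (r • θ) ≤ φ θ) :
    ∃ g₁ g₂ : ℝ → ℝ, ClassKInf g₁ ∧ ClassKInf g₂ ∧ ∀ θ, g₁ (N θ) ≤ φ θ ∧ φ θ ≤ g₂ (N θ) := by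
  obtain ⟨c, C, hc, hC, hNc⟩ := hN.exists_equiv_norm
  obtain ⟨m, M, hm, hM, hφ⟩ := exists_bounds_of_homogeneous hf hφc hφnn hφpd hφGH
  have hinv := hf.const_div_comp_inv hM
  refine ⟨fun s => m * f (C⁻¹ * s), fun s => M / f (c⁻¹ * s)⁻¹,
    (hf.comp (ClassKInf.id.const_mul (inv_pos.2 hC))).const_mul hm,
    hinv.comp (ClassKInf.id.const_mul (inv_pos.2 hc)), fun θ => ⟨?_, ?_⟩⟩
  · refine le_trans ?_ (hφ θ).1
    refine mul_le_mul_of_nonneg_left (hf.mono ?_ ?_) hm.le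
    · exact mul_nonneg (inv_pos.2 hC).le (hN.1 θ)
    rw [inv_mul_le_iff₀ hC]
    exact (hNc θ).2
  · refine (hφ θ).2.trans (hinv.mono (norm_nonneg θ) ?_)
    rw [le_inv_mul_iff₀ hc]
    exact (hNc θ).1

end IsNorm

theorem stmt_6_general {n : ℕ} (ψ : ℝ → ℝ) (ψ₀ : (Fin n → ℝ) → ℝ) (fψ₀ : ℝ → ℝ)
    (hψnn : ∀ e, 0 ≤ ψ e)
    (hψ₀c : Continuous ψ₀) (hψ₀nn : ∀ θ, 0 ≤ ψ₀ θ)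
    (hψ₀pd : ∀ θ, ψ₀ θ = 0 ↔ θ = 0)
    (hfψ₀ : ClassKInf fψ₀)
    (hψ₀GH : ∀ (θ : Fin n → ℝ) (r : ℝ), r ≠ 0 → fψ₀ (1 / |r|) * ψ₀ (r • θ) ≤ ψ₀ θ)
    (x : ℕ → Fin n → ℝ) (N : (Fin n → ℝ) → ℝ) (hN : IsNorm N)
    (αψ αψ₀ l : ℝ) (hαψ : 0 < αψ) (hαψ₀ : 0 < αψ₀) (hl : l ∈ Set.Ioo (0 : ℝ) 1)
    (T : ℕ) (hT : 0 < T) (α β : ℝ → ℝ) (hα : ClassKInf α) (hβ : ClassKInf β)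
    (hPE : ∀ (t : ℕ) (θ : Fin n → ℝ),
      α (N θ) ≤ ∑ k ∈ Finset.Icc (t + 1) (t + T), ψ (dot (x k) θ) ∧
      ∑ k ∈ Finset.Icc (t + 1) (t + T), ψ (dot (x k) θ) ≤ β (N θ))
    (G : ℕ → (Fin n → ℝ) → ℝ)
    (hG : ∀ (t : ℕ) (θ : Fin n → ℝ),
      G t θ = αψ * ∑ k ∈ Finset.Icc 1 t, l ^ (t - k) * ψ (dot (x k) θ) +
        αψ₀ * l ^ t * ψ₀ θ) :
    ∃ g₁ g₂ : ℝ → ℝ, ClassKInf g₁ ∧ ClassKInf g₂ ∧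
      ∀ (t : ℕ) (θ : Fin n → ℝ), g₁ (N θ) ≤ G t θ ∧ G t θ ≤ g₂ (N θ) := by
  obtain ⟨h₁, h₂, hh₁, hh₂, hψ₀h⟩ :=
    hN.exists_classKInf_bounds_of_homogeneous hψ₀c hψ₀nn hψ₀pd hfψ₀ hψ₀GH
  obtain ⟨hl₀, hl₁⟩ := hl
  have hlT : 0 < 1 - l ^ T := sub_pos.2 (pow_lt_one₀ hl₀.le hl₁ hT.ne')
  refine ⟨fun s => min (αψ * l ^ T * α s) (αψ₀ * l ^ T * h₁ s),
    fun s => αψ / (1 - l ^ T) * β s + αψ₀ * h₂ s,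
    (hα.const_mul (by positivity)).min (hh₁.const_mul (by positivity)),
    (hβ.const_mul (by positivity)).add (hh₂.const_mul hαψ₀), fun t θ => ?_⟩
  have hp : ∀ k, 0 ≤ ψ (dot (x k) θ) := fun k => hψnn _
  rw [hG, ← discountedSum]
  exact ⟨min_le_discountedSum_add hl₀.le hl₁.le hp (fun s => (hPE s θ).1) hαψ.le hαψ₀.le
      (hh₁.nonneg (hN.1 θ)) (hψ₀h θ).1 t,
    discountedSum_add_le hl₀.le hl₁ hp hT (fun s => (hPE s θ).2) hαψ.le hαψ₀.le (hψ₀nn θ)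
      (hψ₀h θ).2 t⟩

/-- under PE, the weighted accumulated function G_t is sandwiched
between two time-invariant class-K∞ functions of the norm. -/
theorem stmt_6 {n : ℕ} (ψ : ℝ → ℝ) (ψ₀ : (Fin n → ℝ) → ℝ) (fψ fψ₀ : ℝ → ℝ)
    (hψc : Continuous ψ) (hψnn : ∀ e, 0 ≤ ψ e)
    (hψpd : ∀ e, ψ e = 0 ↔ e = 0) (hψsym : ∀ e, ψ (-e) = ψ e)
    (hfψ : ClassKInf fψ)
    (hψGH : ∀ (e r : ℝ), r ≠ 0 → fψ (1 / |r|) * ψ (r * e) ≤ ψ e)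
    (hψ₀c : Continuous ψ₀) (hψ₀nn : ∀ θ, 0 ≤ ψ₀ θ)
    (hψ₀pd : ∀ θ, ψ₀ θ = 0 ↔ θ = 0) (hψ₀sym : ∀ θ, ψ₀ (-θ) = ψ₀ θ)
    (hfψ₀ : ClassKInf fψ₀)
    (hψ₀GH : ∀ (θ : Fin n → ℝ) (r : ℝ), r ≠ 0 → fψ₀ (1 / |r|) * ψ₀ (r • θ) ≤ ψ₀ θ)
    (x : ℕ → Fin n → ℝ) (N : (Fin n → ℝ) → ℝ) (hN : IsNorm N)
    (αψ αψ₀ l : ℝ) (hαψ : 0 < αψ) (hαψ₀ : 0 < αψ₀) (hl : l ∈ Set.Ioo (0 : ℝ) 1)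
    (T : ℕ) (hT : 0 < T) (α β : ℝ → ℝ) (hα : ClassKInf α) (hβ : ClassKInf β)
    (hPE : ∀ (t : ℕ) (θ : Fin n → ℝ),
      α (N θ) ≤ ∑ k ∈ Finset.Icc (t + 1) (t + T), ψ (dot (x k) θ) ∧
      ∑ k ∈ Finset.Icc (t + 1) (t + T), ψ (dot (x k) θ) ≤ β (N θ))
    (G : ℕ → (Fin n → ℝ) → ℝ)
    (hG : ∀ (t : ℕ) (θ : Fin n → ℝ),
      G t θ = αψ * ∑ k ∈ Finset.Icc 1 t, l ^ (t - k) * ψ (dot (x k) θ) +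
        αψ₀ * l ^ t * ψ₀ θ) :
    ∃ g₁ g₂ : ℝ → ℝ, ClassKInf g₁ ∧ ClassKInf g₂ ∧
      ∀ (t : ℕ) (θ : Fin n → ℝ), g₁ (N θ) ≤ G t θ ∧ G t θ ≤ g₂ (N θ) :=
  stmt_6_general ψ ψ₀ fψ₀ hψnn hψ₀c hψ₀nn hψ₀pd hfψ₀ hψ₀GH x N hN αψ αψ₀ l hαψ hαψ₀ hl T hT α β hα
    hβ hPE G hG
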